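/- arXiv:2401.12802 — 2 statements merged into one kernel-verified Lean document; each statement's English description precedes it below -/
import Mathlib

section
/- For every positive integer m and all real numbers α, β, the preimage φ_{α,β}⁻¹(T) ⊆ (ℤ/mℤ)² of the set T under the map φ_{α,β} is a non-mid-point reducible subset of (ℤ/mℤ)². -/
/-- T₁ = {(a,b) ∈ [0,1/2) × [1/2,1) : 7/12 ≤ a+b ≤ 4/3} ∪ {(a,b) ∈ [0,1/2)² : a+b > 5/6}. -/
def T1 : Set (ℝ × ℝ) :=
  {p | p.1 ∈ Set.Ico (0:ℝ) (1/2) ∧ p.2 ∈ Set.Ico (1/2:ℝ) 1 ∧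
        7/12 ≤ p.1 + p.2 ∧ p.1 + p.2 ≤ 4/3} ∪
  {p | p.1 ∈ Set.Ico (0:ℝ) (1/2) ∧ p.2 ∈ Set.Ico (0:ℝ) (1/2) ∧ 5/6 < p.1 + p.2}

/-- T₂ = {(a,b) ∈ [1/2,1) × [0,1/2) : 7/12 ≤ a+b < 5/6 and 2a+b < 3/2}. -/
def T2 : Set (ℝ × ℝ) :=
  {p | p.1 ∈ Set.Ico (1/2:ℝ) 1 ∧ p.2 ∈ Set.Ico (0:ℝ) (1/2) ∧
        7/12 ≤ p.1 + p.2 ∧ p.1 + p.2 < 5/6 ∧ 2 * p.1 + p.2 < 3/2}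

/-- T = T₁ ∪ T₂. -/
def T : Set (ℝ × ℝ) := T1 ∪ T2

/-- The map φ_{α,β} : (ℤ/mℤ)² → [0,1)², sending (q,r) (with q,r ∈ {0,...,m-1} the
canonical representatives) to (frac(α + q/m), frac(β + r/m)). -/
noncomputable def phi (m : ℕ) (α β : ℝ) (x : ZMod m × ZMod m) : ℝ × ℝ :=
  (Int.fract (α + (x.1.val : ℝ) / m), Int.fract (β + (x.2.val : ℝ) / m))

/-- A point `y ∈ S` is a non-mid-point of `S` if there is no solution to `2y = x + z`
with distinct `x, z ∈ S`. -/
def IsNonMidPoint {G : Type*} [AddCommGroup G] (S : Set G) (y : G) : Prop :=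
  ¬ ∃ x ∈ S, ∃ z ∈ S, x ≠ z ∧ 2 • y = x + z

/-- A set `S` is non-mid-point reducible if every non-empty subset `S' ⊆ S` contains a
point `y ∈ S'` that is a non-mid-point of `S'`. -/
def NonMidPointReducible {G : Type*} [AddCommGroup G] (S : Set G) : Prop :=
  ∀ S' ⊆ S, S'.Nonempty → ∃ y ∈ S', IsNonMidPoint S' y


/-! Order the points of `[0,1)²` lexicographically by `a + b` and then by `a` modulo `1/2`, and
pull this order back along the injective map `φ_{α,β}`. The least element `y` of a finite set is
a non-mid-point: if `2y = x + z`, then the lifts satisfy `x + z - 2y ∈ ℤ²`; since all three lie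
in `T` and neither `x` nor `z` precedes `y`, a case analysis over the three pieces of `T` forces
`x = z`. -/

theorem nonMidPointReducible_of_key_le {G ι : Type*} [AddCommGroup G] [LinearOrder ι]
    {S : Set G} (hS : S.Finite) (key : G → ι)
    (h : ∀ x ∈ S, ∀ y ∈ S, ∀ z ∈ S, 2 • y = x + z → key y ≤ key x → key y ≤ key z → x = z) :
    NonMidPointReducible S := by
  intro S' hS' hne
  obtain ⟨y, hy, hmin⟩ := S'.exists_min_image key (hS.subset hS') hne
  exact ⟨y, hy, fun ⟨x, hx, z, hz, hxz, hyxz⟩ =>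
    hxz (h x (hS' hx) y (hS' hy) z (hS' hz) hyxz (hmin x hx) (hmin z hz))⟩

section FractAddValDiv

variable {m : ℕ} [NeZero m] (α : ℝ)

lemma coe_fract_add_val_div (q : ZMod m) :
    ((Int.fract (α + q.val / m) : ℝ) : UnitAddCircle) = α + ZMod.toAddCircle q := by
  rw [AddCircle.coe_fract, AddCircle.coe_add, ZMod.toAddCircle_apply]

lemma fract_add_val_div_injective :
    Function.Injective fun q : ZMod m => Int.fract (α + q.val / m) := fun u v h => by
  simpa only [coe_fract_add_val_div, add_right_inj, ZMod.toAddCircle_inj]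
    using congrArg ((↑) : ℝ → UnitAddCircle) h

lemma exists_int_fract_add_val_div {u v w : ZMod m} (h : u + v = 2 • w) :
    ∃ n : ℤ, Int.fract (α + u.val / m) + Int.fract (α + v.val / m)
      - 2 * Int.fract (α + w.val / m) = n := by
  have hcirc : ((Int.fract (α + u.val / m) + Int.fract (α + v.val / m)
      - 2 * Int.fract (α + w.val / m) : ℝ) : UnitAddCircle) = 0 := by
    have := congrArg ZMod.toAddCircle (sub_eq_zero.mpr h)
    rw [map_sub, map_add, map_nsmul, map_zero] at this
    rw [two_mul, AddCircle.coe_sub, AddCircle.coe_add, AddCircle.coe_add,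
      coe_fract_add_val_div, coe_fract_add_val_div, coe_fract_add_val_div, ← this]
    abel
  obtain ⟨n, hn⟩ := (AddCircle.coe_eq_zero_iff 1).mp hcirc
  exact ⟨n, by simpa using hn.symm⟩

end FractAddValDiv

lemma phi_injective (m : ℕ) [NeZero m] (α β : ℝ) : Function.Injective (phi m α β) :=
  fun _ _ h => Prod.ext (fract_add_val_div_injective α (congrArg Prod.fst h))
    (fract_add_val_div_injective β (congrArg Prod.snd h))

lemma int_eq_neg_one_or_zero_or_one {x z y : ℝ} (hx : 0 ≤ x ∧ x < 1) (hz : 0 ≤ z ∧ z < 1)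
    (hy : 0 ≤ y ∧ y < 1) {n : ℤ} (h : x + z - 2 * y = n) : n = -1 ∨ n = 0 ∨ n = 1 := by
  have hlo : (-2 : ℝ) < n := by linarith
  have hhi : (n : ℝ) < 2 := by linarith
  have : -2 < n ∧ n < 2 := ⟨by exact_mod_cast hlo, by exact_mod_cast hhi⟩
  omega

lemma mem_T_iff {a b : ℝ} : (a, b) ∈ T ↔
    (0 ≤ a ∧ a < 1/2 ∧ 1/2 ≤ b ∧ b < 1 ∧ 7/12 ≤ a + b ∧ a + b ≤ 4/3) ∨
    (0 ≤ a ∧ a < 1/2 ∧ 0 ≤ b ∧ b < 1/2 ∧ 5/6 < a + b) ∨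
    (1/2 ≤ a ∧ a < 1 ∧ 0 ≤ b ∧ b < 1/2 ∧ 7/12 ≤ a + b ∧ a + b < 5/6 ∧ 2 * a + b < 3/2) := by
  simp only [T, T1, T2, Set.mem_union, Set.mem_ofPred_eq, Set.mem_Ico, and_assoc, or_assoc]

lemma bounds_of_mem_T {a b : ℝ} (h : (a, b) ∈ T) :
    (0 ≤ a ∧ a < 1) ∧ (0 ≤ b ∧ b < 1) ∧ 7/12 ≤ a + b ∧ a + b ≤ 4/3 := by
  rw [mem_T_iff] at h
  rcases h with h | h | h <;> refine ⟨⟨?_, ?_⟩, ⟨?_, ?_⟩, ?_, ?_⟩ <;> linarith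

lemma false_of_mem_T_of_carry {xa xb za zb ya yb : ℝ} (hx : (xa, xb) ∈ T) (hz : (za, zb) ∈ T)
    (hy : (ya, yb) ∈ T) {na nb : ℤ} (ha : xa + za - 2 * ya = na) (hb : xb + zb - 2 * yb = nb)
    (hn : na + nb = 1) : False := by
  obtain ⟨hxa, hxb, -⟩ := bounds_of_mem_T hx
  obtain ⟨hza, hzb, -⟩ := bounds_of_mem_T hz
  obtain ⟨hya, hyb, -⟩ := bounds_of_mem_T hy
  have := int_eq_neg_one_or_zero_or_one hxa hza hya ha
  have := int_eq_neg_one_or_zero_or_one hxb hzb hyb hb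
  obtain ⟨rfl, rfl⟩ | ⟨rfl, rfl⟩ : na = 1 ∧ nb = 0 ∨ na = 0 ∧ nb = 1 := by omega
  all_goals
    push_cast at ha hb
    rw [mem_T_iff] at hx hz hy
    rcases hx with ⟨_, _, _, _, _, _⟩ | ⟨_, _, _, _, _⟩ | ⟨_, _, _, _, _, _, _⟩ <;>
    rcases hz with ⟨_, _, _, _, _, _⟩ | ⟨_, _, _, _, _⟩ | ⟨_, _, _, _, _, _, _⟩ <;>
    rcases hy with ⟨_, _, _, _, _, _⟩ | ⟨_, _, _, _, _⟩ | ⟨_, _, _, _, _, _, _⟩ <;>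
    linarith

/-- Reduction modulo `1/2`, valid for `a ∈ [0, 1)` only. -/
noncomputable def modHalf (a : ℝ) : ℝ := if a < 1/2 then a else a - 1/2

set_option maxHeartbeats 1000000 in
lemma fst_le_of_mem_T_of_add_eq {xa xb za zb ya yb : ℝ} (hx : (xa, xb) ∈ T) (hz : (za, zb) ∈ T)
    (hy : (ya, yb) ∈ T) (hxy : xa + xb = ya + yb) (hzy : za + zb = ya + yb) {n : ℤ}
    (h : xa + za - 2 * ya = n) (hxm : modHalf ya ≤ modHalf xa) (hzm : modHalf ya ≤ modHalf za) :
    xa ≤ za := by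
  have hn := int_eq_neg_one_or_zero_or_one (bounds_of_mem_T hx).1 (bounds_of_mem_T hz).1
    (bounds_of_mem_T hy).1 h
  rw [mem_T_iff] at hx hz hy
  unfold modHalf at hxm hzm
  rcases hn with rfl | rfl | rfl <;> push_cast at h <;>
  rcases hx with ⟨_, _, _, _, _, _⟩ | ⟨_, _, _, _, _⟩ | ⟨_, _, _, _, _, _, _⟩ <;>
  rcases hz with ⟨_, _, _, _, _, _⟩ | ⟨_, _, _, _, _⟩ | ⟨_, _, _, _, _, _, _⟩ <;>
  rcases hy with ⟨_, _, _, _, _, _⟩ | ⟨_, _, _, _, _⟩ | ⟨_, _, _, _, _, _, _⟩ <;>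
  split_ifs at hxm hzm <;> linarith

noncomputable def midKey (p : ℝ × ℝ) : ℝ ×ₗ ℝ := toLex (p.1 + p.2, modHalf p.1)

theorem eq_of_mem_T_of_midKey_le {x z y : ℝ × ℝ} (hx : x ∈ T) (hz : z ∈ T) (hy : y ∈ T)
    {na nb : ℤ} (ha : x.1 + z.1 - 2 * y.1 = na) (hb : x.2 + z.2 - 2 * y.2 = nb)
    (hxy : midKey y ≤ midKey x) (hzy : midKey y ≤ midKey z) : x = z := by
  obtain ⟨xa, xb⟩ := x
  obtain ⟨za, zb⟩ := z
  obtain ⟨ya, yb⟩ := y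
  dsimp only at ha hb
  simp only [midKey, Prod.Lex.toLex_le_toLex] at hxy hzy
  obtain ⟨-, -, hx₁, hx₂⟩ := bounds_of_mem_T hx
  obtain ⟨-, -, hz₁, hz₂⟩ := bounds_of_mem_T hz
  obtain ⟨-, -, hy₁, hy₂⟩ := bounds_of_mem_T hy
  have hsx : ya + yb ≤ xa + xb := by rcases hxy with h | ⟨h, -⟩ <;> linarith
  have hsz : ya + yb ≤ za + zb := by rcases hzy with h | ⟨h, -⟩ <;> linarith
  have hn : 0 ≤ na + nb ∧ na + nb < 2 := by
    have hlo : (0 : ℝ) ≤ na + nb := by linarith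
    have hhi : (na + nb : ℝ) < 2 := by linarith
    exact ⟨by exact_mod_cast hlo, by exact_mod_cast hhi⟩
  obtain hn0 | hn1 : na + nb = 0 ∨ na + nb = 1 := by omega
  · have hn0' : (na : ℝ) + nb = 0 := by exact_mod_cast hn0
    have hxy' : xa + xb = ya + yb := by linarith
    have hzy' : za + zb = ya + yb := by linarith
    have hxm := (hxy.resolve_left hxy'.not_gt).2
    have hzm := (hzy.resolve_left hzy'.not_gt).2
    have hfst : xa = za := le_antisymm (fst_le_of_mem_T_of_add_eq hx hz hy hxy' hzy' ha hxm hzm)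
      (fst_le_of_mem_T_of_add_eq hz hx hy hzy' hxy' (n := na) (by linarith) hzm hxm)
    exact Prod.ext hfst (by linarith)
  · exact (false_of_mem_T_of_carry hx hz hy ha hb hn1).elim

/-- For every positive integer m and all real numbers α, β, the preimage
φ_{α,β}⁻¹(T) ⊆ (ℤ/mℤ)² of T under φ_{α,β} is a non-mid-point reducible subset. -/
theorem stmt6 (m : ℕ) (hm : 0 < m) (α β : ℝ) :
    NonMidPointReducible (phi m α β ⁻¹' T) := by
  have : NeZero m := ⟨hm.ne'⟩
  refine nonMidPointReducible_of_key_le (Set.toFinite _) (midKey ∘ phi m α β) ?_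
  intro x hx y hy z hz hxyz hxy hzy
  obtain ⟨na, ha⟩ := exists_int_fract_add_val_div α (congrArg Prod.fst hxyz).symm
  obtain ⟨nb, hb⟩ := exists_int_fract_add_val_div β (congrArg Prod.snd hxyz).symm
  exact phi_injective m α β (eq_of_mem_T_of_midKey_le hx hz hy ha hb hxy hzy)
end

section
/- For every positive integer m, the subset S = {0, 1, ..., ⌊m/2⌋}² ⊆ (ℤ/mℤ)² (consisting of all pairs of residue classes represented by integers between 0 and ⌊m/2⌋) is non-mid-point reducible, and has size |S| = ⌊(m+2)/2⌋². -/
open Set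

section Reducible

variable {G β : Type*} [AddCommGroup G] [LinearOrder β]

theorem NonMidPointReducible.of_lt_max {S : Set G} (hS : S.Finite) (f : G → β)
    (hf : ∀ x ∈ S, ∀ y ∈ S, ∀ z ∈ S, x ≠ z → 2 • y = x + z → f y < max (f x) (f z)) :
    NonMidPointReducible S := by
  intro S' hS' hne
  obtain ⟨y, hy, hmax⟩ := exists_max_image S' f (hS.subset hS') hne
  refine ⟨y, hy, fun ⟨x, hx, z, hz, hxz, hmid⟩ => ?_⟩
  exact (hf x (hS' hx) y (hS' hy) z (hS' hz) hxz hmid).not_ge (max_le (hmax x hx) (hmax z hz))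

end Reducible

namespace ZMod

variable {m a c e : ℕ}

theorem val_natCast_of_le_half (ha : a ≤ m / 2) : (a : ZMod m).val = a := by
  rw [val_natCast]
  rcases m.eq_zero_or_pos with rfl | hm
  · exact Nat.mod_zero a
  · exact Nat.mod_eq_of_lt (by omega)

theorem injOn_natCast_Iic_half : InjOn (Nat.cast : ℕ → ZMod m) (Iic (m / 2)) :=
  fun a ha b hb hab => by
    rw [← val_natCast_of_le_half ha, ← val_natCast_of_le_half hb, hab]

theorem add_eq_two_mul_or_of_two_nsmul_natCast_eq (ha : a ≤ m / 2) (hc : c ≤ m / 2)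
    (he : e ≤ m / 2) (h : 2 • (a : ZMod m) = c + e) :
    c + e = 2 * a ∨ (c = e ∧ a + c = m / 2) := by
  have hdvd : (m : ℤ) ∣ (c + e : ℤ) - 2 * a := by
    rw [← intCast_zmod_eq_zero_iff_dvd]
    push_cast
    rw [← h, two_nsmul, two_mul, sub_self]
  have hle : |((c + e : ℤ) - 2 * a)| ≤ m := abs_le.mpr ⟨by omega, by omega⟩
  rcases hle.lt_or_eq with hlt | heq
  · have := Int.eq_zero_of_abs_lt_dvd hdvd hlt
    omega
  · rcases (abs_eq (by positivity)).mp heq with h' | h' <;> omega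

end ZMod

def centredSq (M t : ℕ) : ℤ := (2 * t - M) ^ 2

theorem centredSq_add_centredSq {m a c e : ℕ} (ha : a ≤ m / 2) (hc : c ≤ m / 2)
    (he : e ≤ m / 2) (h : 2 • (a : ZMod m) = c + e) :
    centredSq (m / 2) c + centredSq (m / 2) e =
      2 * centredSq (m / 2) a + 2 * ((c : ℤ) - e) ^ 2 := by
  unfold centredSq
  rcases ZMod.add_eq_two_mul_or_of_two_nsmul_natCast_eq ha hc he h with hce | ⟨rfl, hac⟩
  · have hce : (c : ℤ) + e = 2 * a := by exact_mod_cast hce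
    linear_combination (2 * (c : ℤ) + 2 * e + 4 * a - 4 * ((m / 2 : ℕ) : ℤ)) * hce
  · have hac : (a : ℤ) + c = (m / 2 : ℕ) := by exact_mod_cast hac
    linear_combination (8 * ((c : ℤ) - a)) * hac

def halfBox (m : ℕ) : Set (ZMod m × ZMod m) :=
  Prod.map Nat.cast Nat.cast '' (Iic (m / 2) ×ˢ Iic (m / 2))

theorem halfBox_eq (m : ℕ) : halfBox m =
    {p : ZMod m × ZMod m | ∃ a b : ℕ, a ≤ m / 2 ∧ b ≤ m / 2 ∧ p = ((a : ZMod m), (b : ZMod m))} := by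
  ext p
  constructor
  · rintro ⟨⟨a, b⟩, ⟨ha, hb⟩, rfl⟩
    exact ⟨a, b, ha, hb, rfl⟩
  · rintro ⟨a, b, ha, hb, rfl⟩
    exact ⟨(a, b), ⟨ha, hb⟩, rfl⟩

theorem ncard_halfBox (m : ℕ) : (halfBox m).ncard = (m / 2 + 1) ^ 2 := by
  have hinj : InjOn (Prod.map (Nat.cast : ℕ → ZMod m) Nat.cast) (Iic (m / 2) ×ˢ Iic (m / 2)) :=
    ZMod.injOn_natCast_Iic_half.prodMap ZMod.injOn_natCast_Iic_half
  rw [halfBox, hinj.ncard_image, ncard_prod, ncard_Iic_nat, sq]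

theorem nonMidPointReducible_halfBox (m : ℕ) : NonMidPointReducible (halfBox m) := by
  refine .of_lt_max (((finite_Iic _).prod (finite_Iic _)).image _)
    (fun p => centredSq (m / 2) p.1.val + centredSq (m / 2) p.2.val) ?_
  rintro _ ⟨⟨c, d⟩, ⟨hc : c ≤ m / 2, hd : d ≤ m / 2⟩, rfl⟩
    _ ⟨⟨a, b⟩, ⟨ha : a ≤ m / 2, hb : b ≤ m / 2⟩, rfl⟩
    _ ⟨⟨e, f⟩, ⟨he : e ≤ m / 2, hf : f ≤ m / 2⟩, rfl⟩ hne hmid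
  simp only [Prod.map, ne_eq, Prod.ext_iff, Prod.smul_mk, Prod.mk_add_mk] at hne hmid ⊢
  rw [ZMod.val_natCast_of_le_half ha, ZMod.val_natCast_of_le_half hb,
    ZMod.val_natCast_of_le_half hc, ZMod.val_natCast_of_le_half hd,
    ZMod.val_natCast_of_le_half he, ZMod.val_natCast_of_le_half hf]
  have h₁ := centredSq_add_centredSq ha hc he hmid.1
  have h₂ := centredSq_add_centredSq hb hd hf hmid.2
  have hpos : 0 < ((c : ℤ) - e) ^ 2 + ((d : ℤ) - f) ^ 2 := by
    refine (add_nonneg (sq_nonneg _) (sq_nonneg _)).lt_of_ne' fun h0 => hne ?_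
    obtain ⟨hce, hdf⟩ := (add_eq_zero_iff_of_nonneg (sq_nonneg _) (sq_nonneg _)).mp h0
    simp only [pow_eq_zero_iff two_ne_zero, sub_eq_zero, Nat.cast_inj] at hce hdf
    exact ⟨by rw [hce], by rw [hdf]⟩
  rw [lt_max_iff]
  by_contra! hle
  linarith [hle.1, hle.2]

theorem stmt17_general (m : ℕ) :
    NonMidPointReducible
      {p : ZMod m × ZMod m | ∃ a b : ℕ, a ≤ m / 2 ∧ b ≤ m / 2 ∧ p = ((a : ZMod m), (b : ZMod m))} ∧
    {p : ZMod m × ZMod m | ∃ a b : ℕ, a ≤ m / 2 ∧ b ≤ m / 2 ∧ p = ((a : ZMod m), (b : ZMod m))}.ncard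
      = ((m + 2) / 2) ^ 2 := by
  rw [← halfBox_eq]
  exact ⟨nonMidPointReducible_halfBox m, by rw [ncard_halfBox]; congr 1; omega⟩

/-- For every positive integer m, the subset
S = {0, 1, ..., ⌊m/2⌋}² ⊆ (ℤ/mℤ)² (all pairs of residue classes represented by integers
between 0 and ⌊m/2⌋) is non-mid-point reducible, and has size |S| = ⌊(m+2)/2⌋². -/
theorem stmt17 (m : ℕ) (hm : 0 < m) :
    NonMidPointReducible
      {p : ZMod m × ZMod m | ∃ a b : ℕ, a ≤ m / 2 ∧ b ≤ m / 2 ∧ p = ((a : ZMod m), (b : ZMod m))} ∧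
    {p : ZMod m × ZMod m | ∃ a b : ℕ, a ≤ m / 2 ∧ b ≤ m / 2 ∧ p = ((a : ZMod m), (b : ZMod m))}.ncard
      = ((m + 2) / 2) ^ 2 :=
  stmt17_general m
end
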